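/- Let (a_n)_{n=1}^∞ be a sequence of scalars with a_1 = a_2 = 0, let (φ_n)_{n=1}^∞ be an orthonormal system in L₂(X, dμ; H) with fixed strongly measurable representatives, let σ be a permutation of ℕ, and fix an integer k ≥ 0. Set ν_k := 2^{2^k}, M_k := {j ∈ ℕ : ν_k + 1 ≤ j ≤ ν_{k+1}}, and δ_k(x) := sup_{1 ≤ p ≤ q < ∞} ‖Σ_{n=p}^{q}, with the sum restricted to indices n for which σ(n) ∈ M_k, a_{σ(n)} φ_{σ(n)}(x)‖_H. Then (∫_X δ_k(x)² dμ(x))^{1/2} ≤ 8 ( Σ_{n=ν_k+1}^{ν_{k+1}} |a_n|² (log₂ n)² )^{1/2}. -/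

import Mathlib

/-!
Only the indices `n` with `σ n ∈ M_k` contribute; there are `N < 2 ^ h` of them, `h = 2 ^ (k + 1)`.
Listing them increasingly, each sum over `Icc (p + 1) q` is the difference of two initial sums
of this list. An initial sum of length `j < 2 ^ h` is a sum of at most one dyadic block of each
length `2 ^ r`, `r < h` (read off the binary digits of `j`), so by Cauchy–Schwarz its square is at
most `h` times the sum, over all levels `r`, of the squared norms of all dyadic blocks of length
`2 ^ r` (Rademacher–Menshov). This bound no longer depends on `j`; integrating it, orthogonality
turns every level into `∑ |a_n|²`, whence `∫ δ_k² ≤ 4 h² ∑ |a_n|²`. Finally `log₂ n ≥ 2 ^ k` on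
`M_k` absorbs `h² = 4 · 4 ^ k` into the logarithmic weights.
-/

open MeasureTheory Filter
open scoped ENNReal NNReal BigOperators

section Enumeration

open Finset

theorem Finset.sum_range_sum_Ico_mul {M : Type*} [AddCommMonoid M] (g : ℕ → M) (m n : ℕ) :
    ∑ i ∈ range m, ∑ l ∈ Ico (i * n) ((i + 1) * n), g l = ∑ l ∈ range (m * n), g l := by
  induction m with
  | zero => simp
  | succ m ih =>
    rw [sum_range_succ, ih, sum_range_add_sum_Ico _ (Nat.mul_le_mul_right n m.le_succ)]

theorem Nat.sum_filter_range_eq_sum_range_count {M : Type*} [AddCommMonoid M] (p : ℕ → Prop)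
    [DecidablePred p] (u : ℕ → M) (q : ℕ) :
    ∑ n ∈ (range q).filter p, u n = ∑ l ∈ range (Nat.count p q), u (Nat.nth p l) := by
  have hlt : ∀ l < Nat.count p q, ∀ hf : (Set.ofPred p).Finite, l < #hf.toFinset :=
    fun l hl hf => hl.trans_le (Nat.count_le_card hf q)
  refine sum_nbij' (Nat.count p) (Nat.nth p) (fun n hn => ?_) (fun l hl => ?_)
    (fun n hn => Nat.nth_count (mem_filter.1 hn).2)
    (fun l hl => Nat.count_nth (hlt l (mem_range.1 hl)))
    (fun n hn => by rw [Nat.nth_count (mem_filter.1 hn).2])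
  · rw [mem_filter, mem_range] at hn
    exact mem_range.2 (Nat.count_strict_mono hn.2 hn.1)
  · rw [mem_range] at hl
    exact mem_filter.2 ⟨mem_range.2 (Nat.nth_lt_of_lt_count hl), Nat.nth_mem l (hlt l hl)⟩

theorem Finset.count_mem_le_card (T : Finset ℕ) (q : ℕ) : Nat.count (· ∈ T) q ≤ #T := by
  rw [Nat.count_eq_card_filter_range]
  exact card_le_card fun n hn => (mem_filter.1 hn).2

theorem Finset.card_toFinset_ofPred_mem (T : Finset ℕ) (hf : (Set.ofPred (· ∈ T)).Finite) :
    #hf.toFinset = #T := by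
  congr 1
  ext
  simp

theorem Finset.nth_mem_of_lt_card {T : Finset ℕ} {l : ℕ} (hl : l < #T) :
    Nat.nth (· ∈ T) l ∈ T :=
  Nat.nth_mem l fun hf => hl.trans_eq (T.card_toFinset_ofPred_mem hf).symm

theorem Finset.count_nth_of_lt_card {T : Finset ℕ} {l : ℕ} (hl : l < #T) :
    Nat.count (· ∈ T) (Nat.nth (· ∈ T) l) = l :=
  Nat.count_nth fun hf => hl.trans_eq (T.card_toFinset_ofPred_mem hf).symm

theorem Finset.sum_range_card_nth {M : Type*} [AddCommMonoid M] (T : Finset ℕ) (u : ℕ → M) :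
    ∑ l ∈ range #T, u (Nat.nth (· ∈ T) l) = ∑ n ∈ T, u n := by
  obtain ⟨Q, hQ⟩ := T.exists_nat_subset_range
  have hTQ : (range Q).filter (· ∈ T) = T := filter_mem_eq_inter.trans (inter_eq_right.2 hQ)
  calc ∑ l ∈ range #T, u (Nat.nth (· ∈ T) l)
      = ∑ l ∈ range (Nat.count (· ∈ T) Q), u (Nat.nth (· ∈ T) l) := by
        rw [Nat.count_eq_card_filter_range, hTQ]
    _ = ∑ n ∈ T, u n := by rw [← Nat.sum_filter_range_eq_sum_range_count, hTQ]

end Enumeration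

section Dyadic

open Finset

variable {E : Type*} [SeminormedAddCommGroup E]

def dyadicBlock (f : ℕ → E) (r i : ℕ) : E :=
  ∑ l ∈ Ico (i * 2 ^ r) ((i + 1) * 2 ^ r), f l

def dyadicSqSum (f : ℕ → E) (h r : ℕ) : ℝ≥0 :=
  ∑ i ∈ range (2 ^ (h - r)), ‖dyadicBlock f r i‖₊ ^ 2

theorem dyadicSqSum_le_succ (f : ℕ → E) (h r : ℕ) :
    dyadicSqSum f h r ≤ dyadicSqSum f (h + 1) r :=
  sum_le_sum_of_subset (range_subset_range.2 (Nat.pow_le_pow_right two_pos (by omega)))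

theorem dyadicBlock_add_two_pow (f : ℕ → E) {h r : ℕ} (hr : r ≤ h) (i : ℕ) :
    dyadicBlock (fun l => f (2 ^ h + l)) r i = dyadicBlock f r (2 ^ (h - r) + i) := by
  have h2 : 2 ^ h = 2 ^ (h - r) * 2 ^ r := by rw [← pow_add, Nat.sub_add_cancel hr]
  rw [dyadicBlock, sum_Ico_add, dyadicBlock, h2]
  congr 1
  congr 1 <;> ring

theorem dyadicSqSum_add_two_pow_le (f : ℕ → E) {h r : ℕ} (hr : r < h) :
    dyadicSqSum (fun l => f (2 ^ h + l)) h r ≤ dyadicSqSum f (h + 1) r := by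
  have h2 : 2 ^ (h + 1 - r) = 2 ^ (h - r) + 2 ^ (h - r) := by
    rw [← two_mul, ← pow_succ', Nat.sub_add_comm hr.le]
  rw [dyadicSqSum, dyadicSqSum, h2, sum_range_add]
  simp_rw [dyadicBlock_add_two_pow f hr.le]
  exact le_add_self

theorem nnnorm_sum_range_le_sum_sqrt_dyadicSqSum (f : ℕ → E) {h j : ℕ} (hj : j < 2 ^ h) :
    ‖∑ l ∈ range j, f l‖₊ ≤ ∑ r ∈ range h, NNReal.sqrt (dyadicSqSum f h r) := by
  induction h generalizing f j with
  | zero => simp [Nat.lt_one_iff.1 hj]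
  | succ h ih =>
    rw [sum_range_succ]
    rcases lt_or_ge j (2 ^ h) with hjh | hjh
    · calc ‖∑ l ∈ range j, f l‖₊ ≤ ∑ r ∈ range h, NNReal.sqrt (dyadicSqSum f h r) := ih f hjh
        _ ≤ ∑ r ∈ range h, NNReal.sqrt (dyadicSqSum f (h + 1) r) := by
          gcongr; exact dyadicSqSum_le_succ f h _
        _ ≤ _ := le_self_add
    · obtain ⟨j, rfl⟩ := Nat.exists_eq_add_of_le hjh
      have hj' : j < 2 ^ h := by rw [pow_succ] at hj; omega
      rw [sum_range_add, add_comm]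
      refine (nnnorm_add_le _ _).trans (add_le_add ?_ ?_)
      · refine (ih _ hj').trans (sum_le_sum fun r hr => ?_)
        exact NNReal.sqrt_le_sqrt.2 (dyadicSqSum_add_two_pow_le f (mem_range.1 hr))
      · have hfirst : ∑ l ∈ range (2 ^ h), f l = dyadicBlock f h 0 := by
          simp only [dyadicBlock, zero_mul, zero_add, one_mul, range_eq_Ico]
        rw [hfirst]
        refine (NNReal.sqrt_sq _).symm.le.trans (NNReal.sqrt_le_sqrt.2 ?_)
        exact single_le_sum (f := fun i => ‖dyadicBlock f h i‖₊ ^ 2)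
          (fun _ _ => zero_le) (mem_range.2 (by positivity))

theorem iSup_enorm_sum_range_sq_le (f : ℕ → E) (h : ℕ) :
    (⨆ j < 2 ^ h, ‖∑ l ∈ range j, f l‖ₑ) ^ 2
      ≤ h * ∑ r ∈ range h, ∑ i ∈ range (2 ^ (h - r)), ‖dyadicBlock f r i‖ₑ ^ 2 := by
  simp_rw [ENNReal.iSup_pow_of_ne_zero two_ne_zero]
  refine iSup₂_le fun j hj => ?_
  have hsq : ‖∑ l ∈ range j, f l‖₊ ^ 2 ≤ h * ∑ r ∈ range h, dyadicSqSum f h r :=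
    calc ‖∑ l ∈ range j, f l‖₊ ^ 2
        ≤ (∑ r ∈ range h, NNReal.sqrt (dyadicSqSum f h r)) ^ 2 := by
          gcongr; exact nnnorm_sum_range_le_sum_sqrt_dyadicSqSum f hj
      _ ≤ #(range h) * ∑ r ∈ range h, NNReal.sqrt (dyadicSqSum f h r) ^ 2 :=
          sq_sum_le_card_mul_sum_sq
      _ = h * ∑ r ∈ range h, dyadicSqSum f h r := by simp
  simpa [enorm_eq_nnnorm, dyadicSqSum] using ENNReal.coe_le_coe.2 hsq

theorem enorm_sum_filter_Icc_le (P : ℕ → Prop) [DecidablePred P] (u : ℕ → E) (p q : ℕ) :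
    ‖∑ n ∈ (Icc (p + 1) q).filter P, u n‖ₑ
      ≤ ‖∑ n ∈ (range (q + 1)).filter P, u n‖ₑ + ‖∑ n ∈ (range (p + 1)).filter P, u n‖ₑ := by
  rcases lt_or_ge q (p + 1) with hqp | hpq
  · simp [Icc_eq_empty_of_lt hqp, enorm_eq_nnnorm]
  · rw [← Ico_add_one_right_eq_Icc, sum_filter, sum_filter, sum_filter,
      sum_Ico_eq_sub _ (by omega)]
    exact enorm_sub_le

theorem iSup_enorm_sum_filter_Icc_le (T : Finset ℕ) {h : ℕ} (hT : #T < 2 ^ h) (u : ℕ → E) :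
    ⨆ p, ⨆ q, ‖∑ n ∈ (Icc (p + 1) q).filter (· ∈ T), u n‖ₑ
      ≤ 2 * ⨆ j < 2 ^ h, ‖∑ l ∈ range j, if l < #T then u (Nat.nth (· ∈ T) l) else 0‖ₑ := by
  have hinit : ∀ q, ‖∑ n ∈ (range q).filter (· ∈ T), u n‖ₑ
      ≤ ⨆ j < 2 ^ h, ‖∑ l ∈ range j, if l < #T then u (Nat.nth (· ∈ T) l) else 0‖ₑ := fun q => by
    have hq := T.count_mem_le_card q
    rw [Nat.sum_filter_range_eq_sum_range_count]
    refine le_iSup₂_of_le (Nat.count (· ∈ T) q) (hq.trans_lt hT) (le_of_eq ?_)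
    exact congrArg _ <| sum_congr rfl fun l hl => by simp [(mem_range.1 hl).trans_le hq]
  refine iSup₂_le fun p q => (enorm_sum_filter_Icc_le _ u p q).trans ?_
  rw [two_mul]
  exact add_le_add (hinit _) (hinit _)

end Dyadic

section L2

open Finset

variable {X : Type*} [MeasurableSpace X] {μ : Measure X} {𝕜 : Type*} [RCLike 𝕜]
  {H : Type*} [NormedAddCommGroup H] [InnerProductSpace 𝕜 H]

theorem MeasureTheory.MemLp.integrable_inner {f g : X → H} (hf : MemLp f 2 μ)
    (hg : MemLp g 2 μ) : Integrable (fun x => inner 𝕜 (f x) (g x)) μ :=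
  (L2.integrable_inner (𝕜 := 𝕜) hf.toLp hg.toLp).congr <| by
    filter_upwards [hf.coeFn_toLp, hg.coeFn_toLp] with x hfx hgx
    rw [hfx, hgx]

theorem integral_norm_sq_eq_re_integral_inner {F : X → H} (hF : MemLp F 2 μ) :
    ∫ x, ‖F x‖ ^ 2 ∂μ = RCLike.re (∫ x, inner 𝕜 (F x) (F x) ∂μ) := by
  simp_rw [← integral_re (hF.integrable_inner hF), inner_self_eq_norm_sq]

theorem lintegral_enorm_sq_eq_ofReal_integral {F : X → H} (hF : MemLp F 2 μ) :
    ∫⁻ x, ‖F x‖ₑ ^ 2 ∂μ = ENNReal.ofReal (∫ x, ‖F x‖ ^ 2 ∂μ) := by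
  rw [ofReal_integral_eq_lintegral_ofReal ((memLp_two_iff_integrable_sq_norm hF.1).mp hF)
    (Eventually.of_forall fun x => sq_nonneg _)]
  simp_rw [ENNReal.ofReal_pow (norm_nonneg _), ofReal_norm]

theorem integral_norm_sum_sq_eq_sum {ι : Type*} {f : ι → X → H} (hf : ∀ l, MemLp (f l) 2 μ)
    (horth : Pairwise fun l l' => ∫ x, inner 𝕜 (f l x) (f l' x) ∂μ = 0) (s : Finset ι) :
    ∫ x, ‖∑ l ∈ s, f l x‖ ^ 2 ∂μ = ∑ l ∈ s, ∫ x, ‖f l x‖ ^ 2 ∂μ := by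
  have hint l l' := (hf l).integrable_inner (𝕜 := 𝕜) (hf l')
  calc ∫ x, ‖∑ l ∈ s, f l x‖ ^ 2 ∂μ
      = ∫ x, ∑ l ∈ s, ∑ l' ∈ s, RCLike.re (inner 𝕜 (f l x) (f l' x)) ∂μ := by
        simp_rw [← inner_self_eq_norm_sq (𝕜 := 𝕜), sum_inner, inner_sum, map_sum]
    _ = ∑ l ∈ s, ∑ l' ∈ s, RCLike.re (∫ x, inner 𝕜 (f l x) (f l' x) ∂μ) := by
        rw [integral_finsetSum _ fun l _ => integrable_finsetSum _ fun l' _ => (hint l l').re]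
        refine sum_congr rfl fun l _ => ?_
        rw [integral_finsetSum _ fun l' _ => (hint l l').re]
        simp_rw [integral_re (hint _ _)]
    _ = ∑ l ∈ s, RCLike.re (∫ x, inner 𝕜 (f l x) (f l x) ∂μ) :=
        sum_congr rfl fun l hl => sum_eq_single_of_mem l hl fun l' _ hne => by
          rw [horth hne.symm, map_zero]
    _ = ∑ l ∈ s, ∫ x, ‖f l x‖ ^ 2 ∂μ :=
        sum_congr rfl fun l _ => (integral_norm_sq_eq_re_integral_inner (hf l)).symm

theorem lintegral_enorm_sum_sq_eq_sum {ι : Type*} {f : ι → X → H} (hf : ∀ l, MemLp (f l) 2 μ)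
    (horth : Pairwise fun l l' => ∫ x, inner 𝕜 (f l x) (f l' x) ∂μ = 0) (s : Finset ι) :
    ∫⁻ x, ‖∑ l ∈ s, f l x‖ₑ ^ 2 ∂μ = ∑ l ∈ s, ∫⁻ x, ‖f l x‖ₑ ^ 2 ∂μ := by
  have hsum : MemLp (fun x => ∑ l ∈ s, f l x) 2 μ := memLp_finsetSum s fun l _ => hf l
  rw [lintegral_enorm_sq_eq_ofReal_integral hsum, integral_norm_sum_sq_eq_sum hf horth,
    ENNReal.ofReal_sum_of_nonneg fun l _ => integral_nonneg fun x => sq_nonneg _]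
  exact sum_congr rfl fun l _ => (lintegral_enorm_sq_eq_ofReal_integral (hf l)).symm

theorem lintegral_iSup_enorm_sum_range_sq_le {f : ℕ → X → H} (hf : ∀ l, MemLp (f l) 2 μ)
    (horth : Pairwise fun l l' => ∫ x, inner 𝕜 (f l x) (f l' x) ∂μ = 0) (h : ℕ) :
    ∫⁻ x, (⨆ j < 2 ^ h, ‖∑ l ∈ range j, f l x‖ₑ) ^ 2 ∂μ
      ≤ h ^ 2 * ∑ l ∈ range (2 ^ h), ∫⁻ x, ‖f l x‖ₑ ^ 2 ∂μ := by
  have hmeas r i : AEMeasurable (fun x => ‖dyadicBlock (f · x) r i‖ₑ ^ 2) μ :=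
    ((memLp_finsetSum _ fun l _ => hf l).aestronglyMeasurable.enorm).pow_const 2
  have hlevel : ∀ r ∈ range h, ∑ i ∈ range (2 ^ (h - r)),
      ∫⁻ x, ‖dyadicBlock (f · x) r i‖ₑ ^ 2 ∂μ = ∑ l ∈ range (2 ^ h), ∫⁻ x, ‖f l x‖ₑ ^ 2 ∂μ := by
    intro r hr
    simp_rw [dyadicBlock, lintegral_enorm_sum_sq_eq_sum hf horth]
    rw [sum_range_sum_Ico_mul, ← pow_add, Nat.sub_add_cancel (mem_range.1 hr).le]
  calc ∫⁻ x, (⨆ j < 2 ^ h, ‖∑ l ∈ range j, f l x‖ₑ) ^ 2 ∂μ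
      ≤ ∫⁻ x, h * ∑ r ∈ range h, ∑ i ∈ range (2 ^ (h - r)),
          ‖dyadicBlock (f · x) r i‖ₑ ^ 2 ∂μ :=
        lintegral_mono fun x => iSup_enorm_sum_range_sq_le (f · x) h
    _ = h * ∑ r ∈ range h, ∑ i ∈ range (2 ^ (h - r)),
          ∫⁻ x, ‖dyadicBlock (f · x) r i‖ₑ ^ 2 ∂μ := by
        rw [lintegral_const_mul' _ _ (ENNReal.natCast_ne_top h), lintegral_finsetSum' _
          fun r _ => Finset.aemeasurable_fun_sum _ fun i _ => hmeas r i]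
        simp_rw [lintegral_finsetSum' _ fun i _ => hmeas _ i]
    _ = h ^ 2 * ∑ l ∈ range (2 ^ h), ∫⁻ x, ‖f l x‖ₑ ^ 2 ∂μ := by
        rw [sum_congr rfl hlevel, sum_const, card_range, nsmul_eq_mul, ← mul_assoc, sq]

theorem lintegral_iSup_enorm_sum_filter_Icc_sq_le (T : Finset ℕ) {h : ℕ} (hT : #T < 2 ^ h)
    {F : ℕ → X → H} (hF : ∀ n ∈ T, MemLp (F n) 2 μ)
    (horth : (T : Set ℕ).Pairwise fun n n' => ∫ x, inner 𝕜 (F n x) (F n' x) ∂μ = 0) :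
    ∫⁻ x, (⨆ p, ⨆ q, ‖∑ n ∈ (Icc (p + 1) q).filter (· ∈ T), F n x‖ₑ) ^ 2 ∂μ
      ≤ 4 * h ^ 2 * ∑ n ∈ T, ∫⁻ x, ‖F n x‖ₑ ^ 2 ∂μ := by
  -- `Nat.nth` is `0` past the last element of `T`, hence the explicit cut-off.
  set f : ℕ → X → H := fun l x => if l < #T then F (Nat.nth (· ∈ T) l) x else 0 with hf_def
  have hfmem : ∀ l, MemLp (f l) 2 μ := fun l => by
    by_cases hl : l < #T
    · simpa [hf_def, hl] using hF _ (nth_mem_of_lt_card hl)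
    · simp [hf_def, hl]
  have hforth : Pairwise fun l l' => ∫ x, inner 𝕜 (f l x) (f l' x) ∂μ = 0 := by
    intro l l' hne
    by_cases hl : l < #T
    · by_cases hl' : l' < #T
      · simp only [hf_def, if_pos hl, if_pos hl']
        refine horth (nth_mem_of_lt_card hl) (nth_mem_of_lt_card hl') fun heq => hne ?_
        rw [← count_nth_of_lt_card hl, ← count_nth_of_lt_card hl', heq]
      · simp [hf_def, hl']
    · simp [hf_def, hl]
  have hnorm : ∑ l ∈ range (2 ^ h), ∫⁻ x, ‖f l x‖ₑ ^ 2 ∂μ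
      = ∑ n ∈ T, ∫⁻ x, ‖F n x‖ₑ ^ 2 ∂μ := by
    rw [← sum_subset (range_subset_range.2 hT.le) fun l _ hl => by
      simp [hf_def, mem_range.not.1 hl], ← sum_range_card_nth T fun n => ∫⁻ x, ‖F n x‖ₑ ^ 2 ∂μ]
    exact sum_congr rfl fun l hl => by simp [hf_def, mem_range.1 hl]
  calc ∫⁻ x, (⨆ p, ⨆ q, ‖∑ n ∈ (Icc (p + 1) q).filter (· ∈ T), F n x‖ₑ) ^ 2 ∂μ
      ≤ ∫⁻ x, (2 * ⨆ j < 2 ^ h, ‖∑ l ∈ range j, f l x‖ₑ) ^ 2 ∂μ :=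
        lintegral_mono fun x => pow_le_pow_left' (iSup_enorm_sum_filter_Icc_le T hT (F · x)) 2
    _ = 4 * ∫⁻ x, (⨆ j < 2 ^ h, ‖∑ l ∈ range j, f l x‖ₑ) ^ 2 ∂μ := by
        simp_rw [mul_pow]
        rw [lintegral_const_mul' _ _ (by norm_num)]
        norm_num
    _ ≤ 4 * (h ^ 2 * ∑ l ∈ range (2 ^ h), ∫⁻ x, ‖f l x‖ₑ ^ 2 ∂μ) := by
        gcongr
        exact lintegral_iSup_enorm_sum_range_sq_le hfmem hforth h
    _ = _ := by rw [hnorm, mul_assoc]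

theorem lintegral_iSup_enorm_sum_filter_Icc_smul_sq_le (T : Finset ℕ) {h : ℕ}
    (hT : #T < 2 ^ h) (c : ℕ → 𝕜) {ψ : ℕ → X → H} (hψ : ∀ n ∈ T, MemLp (ψ n) 2 μ)
    (horth : ∀ n ∈ T, ∀ n' ∈ T,
      ∫ x, inner 𝕜 (ψ n x) (ψ n' x) ∂μ = if n = n' then 1 else 0) :
    ∫⁻ x, (⨆ p, ⨆ q, ‖∑ n ∈ (Icc (p + 1) q).filter (· ∈ T), c n • ψ n x‖ₑ) ^ 2 ∂μ
      ≤ ENNReal.ofReal (4 * h ^ 2 * ∑ n ∈ T, ‖c n‖ ^ 2) := by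
  have hF : ∀ n ∈ T, MemLp (fun x => c n • ψ n x) 2 μ := fun n hn => (hψ n hn).const_smul (c n)
  refine (lintegral_iSup_enorm_sum_filter_Icc_sq_le (𝕜 := 𝕜) T hT hF
    fun n hn n' hn' hne => ?_).trans_eq ?_
  · simp_rw [inner_smul_left, inner_smul_right]
    rw [integral_const_mul, integral_const_mul, horth n hn n' hn', if_neg hne, mul_zero, mul_zero]
  · rw [ENNReal.ofReal_mul (by positivity), ENNReal.ofReal_mul (by norm_num),
      ENNReal.ofReal_pow (Nat.cast_nonneg _), ENNReal.ofReal_natCast, ENNReal.ofReal_ofNat,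
      ENNReal.ofReal_sum_of_nonneg fun n _ => sq_nonneg _]
    refine congrArg _ (sum_congr rfl fun n hn => ?_)
    rw [lintegral_enorm_sq_eq_ofReal_integral (hF n hn)]
    simp_rw [norm_smul, mul_pow]
    rw [integral_const_mul, integral_norm_sq_eq_re_integral_inner (𝕜 := 𝕜) (hψ n hn),
      horth n hn n hn, if_pos rfl, RCLike.one_re, mul_one]

end L2

theorem two_pow_le_logb_two {k m : ℕ} (hm : 2 ^ 2 ^ k ≤ m) : (2 : ℝ) ^ k ≤ Real.logb 2 m := by
  rw [Real.le_logb_iff_rpow_le one_lt_two (Nat.cast_pos.2 ((Nat.two_pow_pos _).trans_le hm)),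
    show (2 : ℝ) ^ k = ((2 ^ k : ℕ) : ℝ) by push_cast; rfl, Real.rpow_natCast]
  exact_mod_cast hm

theorem sq_two_pow_mul_sum_le_sum_mul_logb_sq {S : Finset ℕ} {k : ℕ}
    (hS : ∀ m ∈ S, 2 ^ 2 ^ k ≤ m) (w : ℕ → ℝ) (hw : ∀ m ∈ S, 0 ≤ w m) :
    ((2 : ℝ) ^ k) ^ 2 * ∑ m ∈ S, w m ≤ ∑ m ∈ S, w m * Real.logb 2 m ^ 2 := by
  rw [Finset.mul_sum]
  refine Finset.sum_le_sum fun m hm => ?_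
  rw [mul_comm]
  gcongr
  exacts [hw m hm, two_pow_le_logb_two (hS m hm)]

theorem rearranged_block_majorant_bound_general
    {X : Type*} [MeasurableSpace X] (μ : Measure X)
    {𝕜 : Type*} [RCLike 𝕜]
    {H : Type*} [NormedAddCommGroup H] [InnerProductSpace 𝕜 H]
    (a : ℕ → 𝕜) (φ : ℕ → X → H)
    (hmem : ∀ n, 1 ≤ n → MemLp (φ n) 2 μ)
    (horth : ∀ n m, 1 ≤ n → 1 ≤ m →
      ∫ x, (inner 𝕜 (φ n x) (φ m x) : 𝕜) ∂μ = if n = m then (1 : 𝕜) else 0)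
    (σ : Equiv.Perm ℕ) (k : ℕ) :
    (∫⁻ x, (⨆ p : ℕ, ⨆ q : ℕ,
        (‖∑ n ∈ (Finset.Icc (p + 1) q).filter
            (fun n => σ n ∈ Finset.Icc (2 ^ 2 ^ k + 1) (2 ^ 2 ^ (k + 1))),
          a (σ n) • φ (σ n) x‖₊ : ℝ≥0∞)) ^ 2 ∂μ) ^ (1 / 2 : ℝ)
      ≤ ENNReal.ofReal
          (8 * Real.sqrt (∑ n ∈ Finset.Icc (2 ^ 2 ^ k + 1) (2 ^ 2 ^ (k + 1)),
            ‖a n‖ ^ 2 * (Real.logb 2 (n : ℝ)) ^ 2)) := by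
  set M := Finset.Icc (2 ^ 2 ^ k + 1) (2 ^ 2 ^ (k + 1))
  set T := M.map σ.symm.toEmbedding
  have hmemT : ∀ n, n ∈ T ↔ σ n ∈ M := fun n => by simp [T]
  have hlarge : ∀ m ∈ M, 2 ^ 2 ^ k ≤ m := fun m hm => (Finset.mem_Icc.1 hm).1.trans' (by omega)
  have hcard : T.card < 2 ^ 2 ^ (k + 1) := by
    rw [Finset.card_map, Nat.card_Icc, Nat.add_sub_add_right]
    exact Nat.sub_lt (Nat.two_pow_pos _) (Nat.two_pow_pos _)
  have hpos : ∀ n ∈ T, 1 ≤ σ n := fun n hn => Nat.one_le_two_pow.trans (hlarge _ ((hmemT n).1 hn))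
  have hbound := lintegral_iSup_enorm_sum_filter_Icc_smul_sq_le (μ := μ) T hcard (a ∘ σ)
    (fun n hn => hmem _ (hpos n hn)) fun n hn n' hn' => by
      simp only [horth _ _ (hpos n hn) (hpos n' hn'), σ.injective.eq_iff]
  have hsum : ∑ n ∈ T, ‖a (σ n)‖ ^ 2 = ∑ m ∈ M, ‖a m‖ ^ 2 := by simp [T]
  have hlog := sq_two_pow_mul_sum_le_sum_mul_logb_sq hlarge (‖a ·‖ ^ 2) fun m _ => sq_nonneg _
  have hfilter (s : Finset ℕ) : s.filter (fun n => σ n ∈ M) = s.filter (· ∈ T) :=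
    Finset.filter_congr fun n _ => (hmemT n).symm
  simp only [hfilter, ← enorm_eq_nnnorm]
  rw [one_div, ENNReal.rpow_inv_le_iff two_pos, ENNReal.rpow_two,
    ← ENNReal.ofReal_pow (by positivity)]
  refine hbound.trans (ENNReal.ofReal_le_ofReal ?_)
  have hW : 0 ≤ ((2 : ℝ) ^ k) ^ 2 * ∑ m ∈ M, ‖a m‖ ^ 2 := by positivity
  rw [Function.comp_def, hsum, mul_pow, Real.sq_sqrt (hW.trans hlog)]
  push_cast
  rw [show ((2 : ℝ) ^ (k + 1)) ^ 2 = 4 * ((2 : ℝ) ^ k) ^ 2 by ring]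
  linarith

/-- L² bound for the majorant δ_k of the rearranged block of the orthogonal series. -/
theorem rearranged_block_majorant_bound
    {X : Type*} [MeasurableSpace X] (μ : Measure X)
    {𝕜 : Type*} [RCLike 𝕜]
    {H : Type*} [NormedAddCommGroup H] [InnerProductSpace 𝕜 H] [CompleteSpace H]
    (a : ℕ → 𝕜) (φ : ℕ → X → H)
    (hmem : ∀ n, 1 ≤ n → MemLp (φ n) 2 μ)
    (horth : ∀ n m, 1 ≤ n → 1 ≤ m →
      ∫ x, (inner 𝕜 (φ n x) (φ m x) : 𝕜) ∂μ = if n = m then (1 : 𝕜) else 0)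
    (ha1 : a 1 = 0) (ha2 : a 2 = 0)
    (σ : Equiv.Perm ℕ) (hσ : σ 0 = 0) (k : ℕ) :
    (∫⁻ x, (⨆ p : ℕ, ⨆ q : ℕ,
        (‖∑ n ∈ (Finset.Icc (p + 1) q).filter
            (fun n => σ n ∈ Finset.Icc (2 ^ 2 ^ k + 1) (2 ^ 2 ^ (k + 1))),
          a (σ n) • φ (σ n) x‖₊ : ℝ≥0∞)) ^ 2 ∂μ) ^ (1 / 2 : ℝ)
      ≤ ENNReal.ofReal
          (8 * Real.sqrt (∑ n ∈ Finset.Icc (2 ^ 2 ^ k + 1) (2 ^ 2 ^ (k + 1)),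
            ‖a n‖ ^ 2 * (Real.logb 2 (n : ℝ)) ^ 2)) :=
  rearranged_block_majorant_bound_general μ a φ hmem horth σ k
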